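/- arXiv:1212.5289 — 2 statements merged into one kernel-verified Lean document; each statement's English description precedes it below -/
import Mathlib

section
/- Let p be an integer such that G^q = 𝓔 for all q > p. Then, for every diagonal matrix T with nonnegative real diagonal entries, T ⊗ (E ⊕ (G ⊗ T) ⊕ (G ⊗ T)² ⊕ ⋯ ⊕ (G ⊗ T)^p) ≤ T ⊗ (E ⊕ (H ⊗ T) ⊕ (H ⊗ T)² ⊕ ⋯ ⊕ (H ⊗ T)ⁿ) entrywise. -/
open Finset

noncomputable section

/-- Max-plus matrix product over `R_ε = ℝ ∪ {-∞}` (modeled as `WithBot ℝ`):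
`(A ⊗ B) i j = max_k (A i k + B k j)`, with `⊥` playing the role of `ε`. -/
def mpMul {n : ℕ} (A B : Matrix (Fin n) (Fin n) (WithBot ℝ)) :
    Matrix (Fin n) (Fin n) (WithBot ℝ) :=
  Matrix.of fun i j => Finset.univ.sup fun k => A i k + B k j

/-- Max-plus identity matrix `E`: `0` on the diagonal, `ε = ⊥` elsewhere. -/
def mpId (n : ℕ) : Matrix (Fin n) (Fin n) (WithBot ℝ) :=
  Matrix.of fun i j => if i = j then (0 : WithBot ℝ) else ⊥

/-- Max-plus matrix power (zeroth power is the identity `E`). -/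
def mpPow {n : ℕ} (A : Matrix (Fin n) (Fin n) (WithBot ℝ)) :
    ℕ → Matrix (Fin n) (Fin n) (WithBot ℝ)
  | 0 => mpId n
  | q + 1 => mpMul (mpPow A q) A

/-- The tandem support matrix `H`: `h i j = 0` if `j = i + 1`, `ε` otherwise. -/
def tandemH (n : ℕ) : Matrix (Fin n) (Fin n) (WithBot ℝ) :=
  Matrix.of fun i j => if (i : ℕ) + 1 = (j : ℕ) then (0 : WithBot ℝ) else ⊥

/-- Diagonal matrix with (real) diagonal entries `t i` and `ε = ⊥` off the diagonal. -/
def mpDiag {n : ℕ} (t : Fin n → ℝ) : Matrix (Fin n) (Fin n) (WithBot ℝ) :=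
  Matrix.of fun i j => if i = j then (t i : WithBot ℝ) else ⊥

/-- Max-plus (entrywise max) sum of a family of matrices over a finite index set. -/
def mpSup {n : ℕ} (s : Finset ℕ) (f : ℕ → Matrix (Fin n) (Fin n) (WithBot ℝ)) :
    Matrix (Fin n) (Fin n) (WithBot ℝ) :=
  Matrix.of fun i j => s.sup fun q => f q i j

/-- The all-`ε` matrix `𝓔`. -/
def botMat (n : ℕ) : Matrix (Fin n) (Fin n) (WithBot ℝ) :=
  Matrix.of fun _ _ => (⊥ : WithBot ℝ)

/-- Max-plus matrix-vector product: `(A ⊗ v) i = max_j (A i j + v j)`. -/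
def mpMulVec {n : ℕ} (A : Matrix (Fin n) (Fin n) (WithBot ℝ)) (v : Fin n → WithBot ℝ) :
    Fin n → WithBot ℝ :=
  fun i => Finset.univ.sup fun j => A i j + v j


/-- Extension of `t` to `ℕ`. -/
noncomputable def uext {n : ℕ} (t : Fin n → ℝ) (s : ℕ) : ℝ :=
  if h : s < n then t ⟨s, h⟩ else 0

/-- Interval-sum bound matrix. -/
noncomputable def Sm {n : ℕ} (t : Fin n → ℝ) (i j : Fin n) : WithBot ℝ :=
  if (i : ℕ) ≤ (j : ℕ) then
    ((∑ s ∈ Finset.Ioc (i : ℕ) (j : ℕ), uext t s : ℝ) : WithBot ℝ) else ⊥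

lemma uext_nonneg {n : ℕ} (t : Fin n → ℝ) (ht : ∀ i, 0 ≤ t i) (s : ℕ) : 0 ≤ uext t s := by
  unfold uext; split <;> [exact ht _; exact le_refl 0]

lemma uext_coe {n : ℕ} (t : Fin n → ℝ) (j : Fin n) : uext t (j : ℕ) = t j := by
  simp [uext, j.isLt]

lemma mpMul_diag_right {n : ℕ} (A : Matrix (Fin n) (Fin n) (WithBot ℝ)) (t : Fin n → ℝ)
    (i j : Fin n) : mpMul A (mpDiag t) i j = A i j + (t j : WithBot ℝ) := by
  apply le_antisymm
  · show Finset.univ.sup (fun k => A i k + mpDiag t k j) ≤ _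
    apply Finset.sup_le
    intro k _
    show A i k + mpDiag t k j ≤ _
    by_cases hk : k = j
    · subst hk; simp [mpDiag]
    · simp [mpDiag, hk]
  · have h := Finset.le_sup (f := fun k => A i k + mpDiag t k j) (Finset.mem_univ j)
    simpa [mpMul, mpDiag] using h

lemma mpMul_diag_left {n : ℕ} (A : Matrix (Fin n) (Fin n) (WithBot ℝ)) (t : Fin n → ℝ)
    (i j : Fin n) : mpMul (mpDiag t) A i j = (t i : WithBot ℝ) + A i j := by
  apply le_antisymm
  · show Finset.univ.sup (fun k => mpDiag t i k + A k j) ≤ _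
    apply Finset.sup_le
    intro k _
    show mpDiag t i k + A k j ≤ _
    by_cases hk : i = k
    · subst hk; simp [mpDiag]
    · simp [mpDiag, hk]
  · have h := Finset.le_sup (f := fun k => mpDiag t i k + A k j) (Finset.mem_univ i)
    simpa [mpMul, mpDiag] using h

lemma pow_G_le_Sm {n : ℕ} (G : Matrix (Fin n) (Fin n) (WithBot ℝ))
    (hG01 : ∀ i j, G i j = 0 ∨ G i j = ⊥)
    (hGtri : ∀ i j : Fin n, ¬ i < j → G i j = ⊥)
    (t : Fin n → ℝ) (ht : ∀ i, 0 ≤ t i) :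
    ∀ m (i j : Fin n), mpPow (mpMul G (mpDiag t)) m i j ≤ Sm t i j := by
  intro m
  induction m with
  | zero =>
    intro i j
    by_cases h : i = j
    · subst h; simp [mpPow, mpId, Sm]
    · simp [mpPow, mpId, h]
  | succ m ih =>
    intro i j
    show Finset.univ.sup
      (fun k => mpPow (mpMul G (mpDiag t)) m i k + mpMul G (mpDiag t) k j) ≤ Sm t i j
    apply Finset.sup_le
    intro k _
    show mpPow (mpMul G (mpDiag t)) m i k + mpMul G (mpDiag t) k j ≤ Sm t i j
    rw [mpMul_diag_right]
    rcases hG01 k j with h0 | hb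
    · have hkj : k < j := by
        by_contra hc
        rw [hGtri k j hc] at h0
        exact absurd h0 (by simp)
      rw [h0, zero_add]
      refine le_trans (add_le_add_left (ih i k) _) ?_
      by_cases hik : (i : ℕ) ≤ (k : ℕ)
      · have hkj' : (k : ℕ) < (j : ℕ) := hkj
        have hij : (i : ℕ) ≤ (j : ℕ) := by omega
        simp only [Sm, if_pos hik, if_pos hij]
        rw [← WithBot.coe_add, WithBot.coe_le_coe]
        rw [← Finset.sum_Ioc_consecutive (uext t) hik (le_of_lt hkj')]
        have h1 : uext t (j : ℕ) ≤ ∑ s ∈ Finset.Ioc (k : ℕ) (j : ℕ), uext t s := by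
          refine Finset.single_le_sum (fun s _ => uext_nonneg t ht s) ?_
          exact Finset.mem_Ioc.mpr ⟨hkj', le_refl _⟩
        rw [uext_coe] at h1
        linarith
      · simp only [Sm, if_neg hik]
        simp
    · rw [hb]
      simp

lemma Sm_le_pow_H {n : ℕ} (t : Fin n → ℝ) :
    ∀ d (i j : Fin n), (j : ℕ) = (i : ℕ) + d →
      Sm t i j ≤ mpPow (mpMul (tandemH n) (mpDiag t)) d i j := by
  intro d
  induction d with
  | zero =>
    intro i j h
    have hij : i = j := Fin.ext (by omega)
    subst hij
    simp [Sm, mpPow, mpId]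
  | succ d ih =>
    intro i j h
    have hkn : (i : ℕ) + d < n := by have := j.isLt; omega
    set k : Fin n := ⟨(i : ℕ) + d, hkn⟩ with hkdef
    have hle := Finset.le_sup
      (f := fun l => mpPow (mpMul (tandemH n) (mpDiag t)) d i l + (mpMul (tandemH n) (mpDiag t)) l j)
      (Finset.mem_univ k)
    show Sm t i j ≤ Finset.univ.sup
      (fun l => mpPow (mpMul (tandemH n) (mpDiag t)) d i l + (mpMul (tandemH n) (mpDiag t)) l j)
    refine le_trans ?_ hle
    show Sm t i j ≤ mpPow (mpMul (tandemH n) (mpDiag t)) d i k + mpMul (tandemH n) (mpDiag t) k j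
    rw [mpMul_diag_right]
    have hH : tandemH n k j = 0 := by
      simp only [tandemH, Matrix.of_apply]
      rw [if_pos]
      show (i : ℕ) + d + 1 = (j : ℕ)
      omega
    rw [hH, zero_add]
    refine le_trans ?_ (add_le_add_left (ih i k rfl) _)
    have hik : (i : ℕ) ≤ (k : ℕ) := Nat.le_add_right _ _
    have hij : (i : ℕ) ≤ (j : ℕ) := by omega
    simp only [Sm, if_pos hik, if_pos hij]
    rw [← WithBot.coe_add, WithBot.coe_le_coe]
    have hj : (j : ℕ) = (k : ℕ) + 1 := by show _ = (i:ℕ) + d + 1; omega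
    rw [hj, Finset.sum_Ioc_succ_top hik (uext t), ← hj, uext_coe]

/-- Let `p` be an integer such that `G^q = 𝓔` for all `q > p`. Then, for every
diagonal matrix `T` with nonnegative real diagonal entries,
`T ⊗ (E ⊕ (G ⊗ T) ⊕ ⋯ ⊕ (G ⊗ T)^p) ≤ T ⊗ (E ⊕ (H ⊗ T) ⊕ ⋯ ⊕ (H ⊗ T)ⁿ)` entrywise.
(Here the max-plus sums run over exponents `0, 1, …, p` and `0, 1, …, n` respectively,
with zeroth power the identity `E`.) -/
theorem diag_mul_star_acyclic_le_diag_mul_star_tandem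
    {n : ℕ} (hn : 1 ≤ n) (G : Matrix (Fin n) (Fin n) (WithBot ℝ))
    (hG01 : ∀ i j, G i j = 0 ∨ G i j = ⊥)
    (hGtri : ∀ i j : Fin n, ¬ i < j → G i j = ⊥)
    (p : ℕ) (hp : ∀ q, p < q → mpPow G q = botMat n)
    (t : Fin n → ℝ) (ht : ∀ i, 0 ≤ t i) :
    ∀ i j,
      mpMul (mpDiag t)
        (mpSup (Finset.range (p + 1)) (fun m => mpPow (mpMul G (mpDiag t)) m)) i j ≤
      mpMul (mpDiag t)
        (mpSup (Finset.range (n + 1)) (fun m => mpPow (mpMul (tandemH n) (mpDiag t)) m)) i j := by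
  intro i j
  rw [mpMul_diag_left, mpMul_diag_left]
  apply add_le_add_right
  show (Finset.range (p + 1)).sup (fun m => mpPow (mpMul G (mpDiag t)) m i j) ≤
    (Finset.range (n + 1)).sup (fun m => mpPow (mpMul (tandemH n) (mpDiag t)) m i j)
  apply Finset.sup_le
  intro m _
  show mpPow (mpMul G (mpDiag t)) m i j ≤ _
  refine le_trans (pow_G_le_Sm G hG01 hGtri t ht m i j) ?_
  by_cases hij : (i : ℕ) ≤ (j : ℕ)
  · have hd : (j : ℕ) = (i : ℕ) + ((j : ℕ) - (i : ℕ)) := by omega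
    refine le_trans (Sm_le_pow_H t ((j : ℕ) - (i : ℕ)) i j hd) ?_
    refine Finset.le_sup (f := fun q => mpPow (mpMul (tandemH n) (mpDiag t)) q i j) ?_
    refine Finset.mem_range.mpr ?_
    have := j.isLt; omega
  · simp [Sm, hij]
end
end

section
/- (Lemma 1) Let p be an integer such that G^q = 𝓔 for all q > p, and let T be a diagonal matrix with nonnegative real diagonal entries. Define A = (⊕_{j=0}^{p} (T ⊗ Gᵀ)^j) ⊗ T and B = (⊕_{j=0}^{n} (T ⊗ Hᵀ)^j) ⊗ T, where Mᵀ denotes the transpose. Then A ≤ B entrywise. -/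
open Finset Matrix

noncomputable section

lemma mpMul_apply {n : ℕ} (A B : Matrix (Fin n) (Fin n) (WithBot ℝ)) (i j : Fin n) :
    mpMul A B i j = Finset.univ.sup fun k => A i k + B k j := rfl

lemma mpSup_apply {n : ℕ} (s : Finset ℕ) (f : ℕ → Matrix (Fin n) (Fin n) (WithBot ℝ))
    (i j : Fin n) : mpSup s f i j = s.sup fun q => f q i j := rfl

lemma mpPow_succ_apply {n : ℕ} (A : Matrix (Fin n) (Fin n) (WithBot ℝ)) (q : ℕ) (i j : Fin n) :
    mpPow A (q + 1) i j = Finset.univ.sup fun k => mpPow A q i k + A k j := rfl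

/-- upper bound matrix -/
def eMat {n : ℕ} (t : Fin n → ℝ) : Matrix (Fin n) (Fin n) (WithBot ℝ) :=
  Matrix.of fun i j => if j ≤ i then ((∑ k ∈ Finset.Ioc j i, t k : ℝ) : WithBot ℝ) else ⊥

lemma TG_entry_le {n : ℕ} (t : Fin n → ℝ) (G : Matrix (Fin n) (Fin n) (WithBot ℝ))
    (hG01 : ∀ i j, G i j = 0 ∨ G i j = ⊥)
    (hGtri : ∀ i j : Fin n, ¬ i < j → G i j = ⊥) (k j : Fin n) :
    mpMul (mpDiag t) Gᵀ k j ≤ if j < k then (t k : WithBot ℝ) else ⊥ := by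
  rw [mpMul_apply]
  apply Finset.sup_le
  intro l _
  by_cases hl : k = l
  · subst hl
    simp only [mpDiag, Matrix.of_apply, if_pos rfl, Matrix.transpose_apply]
    by_cases hjk : j < k
    · rw [if_pos hjk]
      rcases hG01 j k with h | h
      · simp [h]
      · simp [h]
    · rw [if_neg hjk, hGtri j k hjk]
      simp
  · simp [mpDiag, hl]

lemma pow_G_le {n : ℕ} (t : Fin n → ℝ) (ht : ∀ i, 0 ≤ t i)
    (G : Matrix (Fin n) (Fin n) (WithBot ℝ))
    (hG01 : ∀ i j, G i j = 0 ∨ G i j = ⊥)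
    (hGtri : ∀ i j : Fin n, ¬ i < j → G i j = ⊥) :
    ∀ m (i j : Fin n), mpPow (mpMul (mpDiag t) Gᵀ) m i j ≤ eMat t i j := by
  intro m
  induction m with
  | zero =>
    intro i j
    by_cases h : i = j
    · subst h
      simp [mpPow, mpId, eMat]
    · simp [mpPow, mpId, h]
  | succ m ih =>
    intro i j
    rw [mpPow_succ_apply]
    apply Finset.sup_le
    intro k _
    calc mpPow (mpMul (mpDiag t) Gᵀ) m i k + mpMul (mpDiag t) Gᵀ k j
        ≤ eMat t i k + (if j < k then (t k : WithBot ℝ) else ⊥) :=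
          add_le_add (ih i k) (TG_entry_le t G hG01 hGtri k j)
      _ ≤ eMat t i j := by
          by_cases hjk : j < k
          · rw [if_pos hjk]
            by_cases hki : k ≤ i
            · have hji : j ≤ i := le_trans (le_of_lt hjk) hki
              simp only [eMat, Matrix.of_apply, if_pos hki, if_pos hji]
              rw [← WithBot.coe_add, WithBot.coe_le_coe]
              have hsub : insert k (Finset.Ioc k i) ⊆ Finset.Ioc j i := by
                intro x hx
                rcases Finset.mem_insert.mp hx with h | h
                · subst h; exact Finset.mem_Ioc.mpr ⟨hjk, hki⟩
                · rcases Finset.mem_Ioc.mp h with ⟨h1, h2⟩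
                  exact Finset.mem_Ioc.mpr ⟨lt_trans hjk h1, h2⟩
              have : (∑ x ∈ Finset.Ioc k i, t x) + t k
                  = ∑ x ∈ insert k (Finset.Ioc k i), t x := by
                rw [Finset.sum_insert (by simp), add_comm]
              rw [this]
              exact Finset.sum_le_sum_of_subset_of_nonneg hsub (fun x _ _ => ht x)
            · simp only [eMat, Matrix.of_apply, if_neg hki]
              simp
          · rw [if_neg hjk]
            simp

/-- key lemma for the H-side lower bound -/
lemma pow_H_ge {n : ℕ} (t : Fin n → ℝ) :
    ∀ d (i j : Fin n), (j : ℕ) + d = (i : ℕ) →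
      ((∑ k ∈ Finset.Ioc j i, t k : ℝ) : WithBot ℝ)
        ≤ mpPow (mpMul (mpDiag t) (tandemH n)ᵀ) d i j := by
  intro d
  induction d with
  | zero =>
    intro i j h
    have : j = i := Fin.ext (by omega)
    subst this
    simp [mpPow, mpId]
  | succ d ih =>
    intro i j h
    have hj1 : (j : ℕ) + 1 < n := by have := i.isLt; omega
    set j' : Fin n := ⟨(j : ℕ) + 1, hj1⟩ with hj'
    have hj'v : ((j' : Fin n) : ℕ) = (j : ℕ) + 1 := rfl
    have hTH : (t j' : WithBot ℝ) ≤ mpMul (mpDiag t) (tandemH n)ᵀ j' j := by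
      have : mpDiag t j' j' + (tandemH n)ᵀ j' j ≤ mpMul (mpDiag t) (tandemH n)ᵀ j' j := by
        rw [mpMul_apply]
        exact Finset.le_sup (f := fun l => mpDiag t j' l + (tandemH n)ᵀ l j)
          (Finset.mem_univ j')
      refine le_trans ?_ this
      simp [mpDiag, tandemH, hj'v]
    have hIoc : Finset.Ioc j i = insert j' (Finset.Ioc j' i) := by
      ext x
      simp only [Finset.mem_Ioc, Finset.mem_insert, Fin.lt_def, Fin.le_def, hj'v]
      constructor
      · rintro ⟨h1, h2⟩
        by_cases hx : (x : ℕ) = (j : ℕ) + 1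
        · left; exact Fin.ext hx
        · right; exact ⟨by omega, h2⟩
      · rintro (rfl | ⟨h1, h2⟩)
        · exact ⟨by omega, by omega⟩
        · exact ⟨by omega, h2⟩

    rw [hIoc, Finset.sum_insert (by simp)]
    have hterm : mpPow (mpMul (mpDiag t) (tandemH n)ᵀ) d i j'
        + mpMul (mpDiag t) (tandemH n)ᵀ j' j
        ≤ mpPow (mpMul (mpDiag t) (tandemH n)ᵀ) (d + 1) i j := by
      rw [mpPow_succ_apply]
      exact Finset.le_sup
        (f := fun k => mpPow (mpMul (mpDiag t) (tandemH n)ᵀ) d i k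
          + mpMul (mpDiag t) (tandemH n)ᵀ k j) (Finset.mem_univ j')
    refine le_trans ?_ hterm
    have hih := ih i j' (by rw [hj'v]; omega)
    calc ((t j' + ∑ k ∈ Finset.Ioc j' i, t k : ℝ) : WithBot ℝ)
        = ((∑ k ∈ Finset.Ioc j' i, t k : ℝ) : WithBot ℝ) + (t j' : WithBot ℝ) := by
          rw [← WithBot.coe_add, add_comm]
      _ ≤ _ := add_le_add hih hTH

/-- **Lemma 1.** Let `p` be an integer such that `G^q = 𝓔` for all `q > p`, and
let `T` be a diagonal matrix with nonnegative real diagonal entries. Define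
`A = (⊕_{j=0}^{p} (T ⊗ Gᵀ)^j) ⊗ T` and `B = (⊕_{j=0}^{n} (T ⊗ Hᵀ)^j) ⊗ T`.
Then `A ≤ B` entrywise. -/
theorem forkJoin_state_matrix_le_tandem_state_matrix
    {n : ℕ} (hn : 1 ≤ n) (G : Matrix (Fin n) (Fin n) (WithBot ℝ))
    (hG01 : ∀ i j, G i j = 0 ∨ G i j = ⊥)
    (hGtri : ∀ i j : Fin n, ¬ i < j → G i j = ⊥)
    (p : ℕ) (hp : ∀ q, p < q → mpPow G q = botMat n)
    (t : Fin n → ℝ) (ht : ∀ i, 0 ≤ t i)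
    (A B : Matrix (Fin n) (Fin n) (WithBot ℝ))
    (hA : A = mpMul
      (mpSup (Finset.range (p + 1)) (fun m => mpPow (mpMul (mpDiag t) Gᵀ) m)) (mpDiag t))
    (hB : B = mpMul
      (mpSup (Finset.range (n + 1)) (fun m => mpPow (mpMul (mpDiag t) (tandemH n)ᵀ) m))
      (mpDiag t)) :
    ∀ i j, A i j ≤ B i j := by
  intro i j
  -- upper bound on A
  have hAle : A i j ≤ eMat t i j + (t j : WithBot ℝ) := by
    rw [hA, mpMul_apply]
    apply Finset.sup_le
    intro k _
    by_cases hk : k = j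
    · subst hk
      refine add_le_add ?_ (by simp [mpDiag])
      rw [mpSup_apply]
      apply Finset.sup_le
      intro m _
      exact pow_G_le t ht G hG01 hGtri m i k
    · have : mpDiag t k j = ⊥ := by simp [mpDiag, hk]
      simp [this]
  by_cases hji : j ≤ i
  · have hBge : eMat t i j + (t j : WithBot ℝ) ≤ B i j := by
      rw [hB]
      have hterm : mpSup (Finset.range (n + 1))
            (fun m => mpPow (mpMul (mpDiag t) (tandemH n)ᵀ) m) i j + mpDiag t j j
          ≤ B i j := by
        rw [hB, mpMul_apply]
        exact Finset.le_sup (f := fun k => mpSup (Finset.range (n + 1))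
          (fun m => mpPow (mpMul (mpDiag t) (tandemH n)ᵀ) m) i k + mpDiag t k j)
          (Finset.mem_univ j)
      rw [hB] at hterm
      refine le_trans ?_ hterm
      have hd : (j : ℕ) + ((i : ℕ) - (j : ℕ)) = (i : ℕ) := by
        have := Fin.le_def.mp hji; omega
      have hmem : (i : ℕ) - (j : ℕ) ∈ Finset.range (n + 1) := by
        have := i.isLt; exact Finset.mem_range.mpr (by omega)
      have hsup : mpPow (mpMul (mpDiag t) (tandemH n)ᵀ) ((i : ℕ) - (j : ℕ)) i j
          ≤ mpSup (Finset.range (n + 1))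
            (fun m => mpPow (mpMul (mpDiag t) (tandemH n)ᵀ) m) i j := by
        rw [mpSup_apply]
        exact Finset.le_sup (f := fun q => mpPow (mpMul (mpDiag t) (tandemH n)ᵀ) q i j) hmem
      have heMat : eMat t i j = ((∑ k ∈ Finset.Ioc j i, t k : ℝ) : WithBot ℝ) := by
        simp [eMat, hji]
      rw [heMat]
      refine add_le_add (le_trans (pow_H_ge t _ i j hd) hsup) ?_
      simp [mpDiag]
    exact le_trans hAle hBge
  · have : eMat t i j = ⊥ := by simp [eMat, hji]
    rw [this] at hAle
    simp only [WithBot.bot_add] at hAle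
    exact le_trans hAle bot_le
end
end
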